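/- arXiv:2010.04721 — 5 statements merged into one kernel-verified Lean document; each statement's English description precedes it below -/
import Mathlib

section
/- Let ω : [-1/2,1/2] → ℝ be a unimodal dispersion relation, let γ > 0, let k ∈ (0,1/2), and suppose that J̃(ε − i·ω(k)) tends to a limit ζ ∈ ℂ as ε → 0+. Then the scattering coefficient ν(k) := (1 + γζ)⁻¹ satisfies |ν(k)| ≤ 2|ω̄'(k)|/(γ + 2|ω̄'(k)|), where ω̄'(k) := ω'(k)/(2π). -/
/-!
Write `λ = ε - i ω(k)`. Partial fractions give
`Re (λ / (λ² + w²)) = (P_ε(w + ω(k)) + P_ε(w - ω(k))) / 2` with the Lorentzian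
`P_ε(x) = ε / (ε² + x²) ≥ 0`, so `Re J̃(λ)` is at least the contribution of
`P_ε(ω(ℓ) - ω(k)) / 2` from the two windows `|ℓ ∓ k| ≤ δ`. For any `M > ω'(k)` we have `|ω(ℓ) - ω(k)| ≤ M |ℓ ∓ k|` there (differentiability
at `k` and evenness), so each window contributes at least `arctan(Mδ/ε) / M → π / (2M)`.
Hence `Re ζ ≥ π / ω'(k)`, and `|1 + γζ| ≥ 1 + γπ / ω'(k)` is the claimed bound.
-/

open Real Filter Set Topology
open Complex (I)

noncomputable def jTilde (ω : ℝ → ℝ) (z : ℂ) : ℂ :=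
  ∫ ℓ in (-(1/2) : ℝ)..(1/2), z / (z ^ 2 + (ω ℓ : ℂ) ^ 2)

noncomputable def lorentzian (ε x : ℝ) : ℝ := ε / (ε ^ 2 + x ^ 2)

lemma lorentzian_nonneg {ε : ℝ} (hε : 0 ≤ ε) (x : ℝ) : 0 ≤ lorentzian ε x := by
  unfold lorentzian; positivity

lemma lorentzian_le_of_abs_le {ε x y : ℝ} (hε : 0 < ε) (h : |x| ≤ |y|) :
    lorentzian ε y ≤ lorentzian ε x := by
  unfold lorentzian
  have : x ^ 2 ≤ y ^ 2 := sq_le_sq.2 h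
  gcongr

lemma continuous_lorentzian {ε : ℝ} (hε : ε ≠ 0) : Continuous (lorentzian ε) := by
  unfold lorentzian
  exact continuous_const.div (by fun_prop) fun x => by positivity

lemma integral_lorentzian_mul (ε M δ p : ℝ) (hε : 0 < ε) (hM : 0 < M) :
    ∫ t in (p - δ)..(p + δ), lorentzian ε (M * (t - p)) = 2 / M * arctan (M * δ / ε) := by
  have hF : ∀ t,
      HasDerivAt (fun t => arctan (M * (t - p) / ε) / M) (lorentzian ε (M * (t - p))) t := by
    intro t
    have hu : HasDerivAt (fun t => M * (t - p) / ε) (M / ε) t := by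
      simpa using (((hasDerivAt_id t).sub_const p).const_mul M).div_const ε
    refine (((hasDerivAt_arctan _).comp t hu).div_const M).congr_deriv ?_
    unfold lorentzian
    field_simp
  rw [intervalIntegral.integral_eq_sub_of_hasDerivAt (fun t _ => hF t)
    (((continuous_lorentzian hε.ne').comp (by fun_prop)).intervalIntegrable _ _)]
  rw [show M * (p - δ - p) / ε = -(M * δ / ε) by ring,
    show M * (p + δ - p) / ε = M * δ / ε by ring, arctan_neg]
  ring

lemma re_inv_ofReal_sub_I_mul (ε x : ℝ) : ((ε : ℂ) - I * x)⁻¹.re = lorentzian ε x := by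
  simp [Complex.inv_re, Complex.normSq_apply, lorentzian]
  ring_nf

lemma ofReal_sub_I_mul_ne_zero {ε : ℝ} (hε : ε ≠ 0) (x : ℝ) : (ε : ℂ) - I * x ≠ 0 := by
  intro h
  apply hε
  simpa using congrArg Complex.re h

lemma ofReal_sub_I_mul_sq_add_sq (ε a w : ℝ) :
    ((ε : ℂ) - I * a) ^ 2 + (w : ℂ) ^ 2 = ((ε : ℂ) - I * ↑(w + a)) * ((ε : ℂ) - I * ↑(a - w)) := by
  push_cast
  ring_nf
  rw [Complex.I_sq]
  ring

lemma ofReal_sub_I_mul_div_sq_add_sq {ε : ℝ} (hε : ε ≠ 0) (a w : ℝ) :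
    ((ε : ℂ) - I * a) / (((ε : ℂ) - I * a) ^ 2 + (w : ℂ) ^ 2)
      = (((ε : ℂ) - I * ↑(w + a))⁻¹ + ((ε : ℂ) - I * ↑(a - w))⁻¹) / 2 := by
  have h₁ := ofReal_sub_I_mul_ne_zero hε (w + a)
  have h₂ := ofReal_sub_I_mul_ne_zero hε (a - w)
  rw [ofReal_sub_I_mul_sq_add_sq]
  field_simp
  push_cast
  ring

lemma re_div_sq_add_sq {ε : ℝ} (hε : ε ≠ 0) (a w : ℝ) :
    (((ε : ℂ) - I * a) / (((ε : ℂ) - I * a) ^ 2 + (w : ℂ) ^ 2)).re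
      = (lorentzian ε (w + a) + lorentzian ε (w - a)) / 2 := by
  rw [ofReal_sub_I_mul_div_sq_add_sq hε, Complex.div_ofNat_re, Complex.add_re,
    re_inv_ofReal_sub_I_mul, re_inv_ofReal_sub_I_mul]
  unfold lorentzian
  ring

lemma continuousOn_div_sq_add_sq {ω : ℝ → ℝ} {s : Set ℝ} (hω : ContinuousOn ω s) {ε : ℝ}
    (hε : ε ≠ 0) (a : ℝ) :
    ContinuousOn (fun ℓ => ((ε : ℂ) - I * a) / (((ε : ℂ) - I * a) ^ 2 + (ω ℓ : ℂ) ^ 2)) s := by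
  refine continuousOn_const.div (by fun_prop) fun ℓ _ => ?_
  rw [ofReal_sub_I_mul_sq_add_sq]
  exact mul_ne_zero (ofReal_sub_I_mul_ne_zero hε _) (ofReal_sub_I_mul_ne_zero hε _)

lemma re_jTilde {ω : ℝ → ℝ} (hω : ContinuousOn ω (Icc (-(1/2)) (1/2))) {ε : ℝ} (hε : ε ≠ 0)
    (a : ℝ) :
    (jTilde ω (ε - I * a)).re
      = ∫ ℓ in (-(1/2) : ℝ)..(1/2), (lorentzian ε (ω ℓ + a) + lorentzian ε (ω ℓ - a)) / 2 := by
  rw [jTilde, ← Complex.reCLM_apply, ← ContinuousLinearMap.intervalIntegral_comp_comm]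
  · simp only [Complex.reCLM_apply, re_div_sq_add_sq hε]
  · exact (continuousOn_div_sq_add_sq hω hε a).intervalIntegrable_of_Icc (by norm_num)

lemma le_integral_lorentzian {φ : ℝ → ℝ} {a p δ M ε : ℝ} (hε : 0 < ε) (hM : 0 < M) (hδ : 0 ≤ δ)
    (hφ : ContinuousOn φ (Icc (p - δ) (p + δ)))
    (hlip : ∀ t ∈ Icc (p - δ) (p + δ), |φ t - a| ≤ M * |t - p|) :
    2 / M * arctan (M * δ / ε) ≤ ∫ t in (p - δ)..(p + δ), lorentzian ε (φ t - a) := by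
  rw [← integral_lorentzian_mul ε M δ p hε hM]
  refine intervalIntegral.integral_mono_on (by linarith)
    (((continuous_lorentzian hε.ne').comp (by fun_prop)).intervalIntegrable _ _)
    (((continuous_lorentzian hε.ne').comp_continuousOn
      (hφ.sub continuousOn_const)).intervalIntegrable_of_Icc (by linarith))
    fun t ht => lorentzian_le_of_abs_le hε ?_
  rw [abs_mul, abs_of_pos hM]
  exact hlip t ht

lemma le_re_jTilde {ω : ℝ → ℝ} (hω : ContinuousOn ω (Icc (-(1/2)) (1/2)))
    (heven : ∀ ℓ ∈ Icc (-(1/2) : ℝ) (1/2), ω (-ℓ) = ω ℓ) {k δ M ε : ℝ} (hε : 0 < ε) (hM : 0 < M)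
    (hδ : 0 ≤ δ) (hδk : δ ≤ k) (hkδ : k + δ ≤ 1/2)
    (hlip : ∀ ℓ ∈ Icc (k - δ) (k + δ), |ω ℓ - ω k| ≤ M * |ℓ - k|) :
    2 / M * arctan (M * δ / ε) ≤ (jTilde ω (ε - I * ω k)).re := by
  set g := fun ℓ => lorentzian ε (ω ℓ - ω k)
  have hg : ContinuousOn g (Icc (-(1/2)) (1/2)) :=
    (continuous_lorentzian hε.ne').comp_continuousOn (hω.sub continuousOn_const)
  have hg_nonneg : ∀ ℓ, 0 ≤ g ℓ := fun ℓ => lorentzian_nonneg hε.le _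
  have hlip_neg : ∀ ℓ ∈ Icc (-k - δ) (-k + δ), |ω ℓ - ω k| ≤ M * |ℓ - -k| := by
    intro ℓ hℓ
    have hmem : -ℓ ∈ Icc (k - δ) (k + δ) := ⟨by linarith [hℓ.2], by linarith [hℓ.1]⟩
    rw [← heven ℓ ⟨by linarith [hℓ.1], by linarith [hℓ.2]⟩,
      show ℓ - -k = -(-ℓ - k) by ring, abs_neg]
    exact hlip (-ℓ) hmem
  have hwindow : ∀ p, -(1/2) ≤ p - δ → p + δ ≤ 1/2 →
      (∀ ℓ ∈ Icc (p - δ) (p + δ), |ω ℓ - ω k| ≤ M * |ℓ - p|) →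
      2 / M * arctan (M * δ / ε) ≤ ∫ ℓ in (p - δ)..(p + δ), g ℓ := fun p h₁ h₂ h =>
    le_integral_lorentzian hε hM hδ (hω.mono (Icc_subset_Icc h₁ h₂)) h
  have hint : ∀ a ∈ Icc (-(1/2) : ℝ) (1/2), ∀ b ∈ Icc (-(1/2) : ℝ) (1/2),
      IntervalIntegrable g MeasureTheory.volume a b := fun a ha b hb =>
    (hg.mono (uIcc_subset_Icc ha hb)).intervalIntegrable
  calc 2 / M * arctan (M * δ / ε)
      = (2 / M * arctan (M * δ / ε) + 2 / M * arctan (M * δ / ε)) / 2 := by ring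
    _ ≤ ((∫ ℓ in (-k - δ)..(-k + δ), g ℓ) + ∫ ℓ in (k - δ)..(k + δ), g ℓ) / 2 := by
        gcongr
        · exact hwindow (-k) (by linarith) (by linarith) hlip_neg
        · exact hwindow k (by linarith) hkδ hlip
    _ ≤ ((∫ ℓ in (-(1/2))..0, g ℓ) + ∫ ℓ in 0..(1/2), g ℓ) / 2 := by
        gcongr
        · exact intervalIntegral.integral_mono_interval (by linarith) (by linarith) (by linarith)
            (Eventually.of_forall hg_nonneg) (hint _ (by norm_num) _ (by norm_num))
        · exact intervalIntegral.integral_mono_interval (by linarith) (by linarith) (by linarith)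
            (Eventually.of_forall hg_nonneg) (hint _ (by norm_num) _ (by norm_num))
    _ = (∫ ℓ in (-(1/2))..(1/2), g ℓ) / 2 := by
        rw [intervalIntegral.integral_add_adjacent_intervals (hint _ (by norm_num) _ (by norm_num))
          (hint _ (by norm_num) _ (by norm_num))]
    _ ≤ ∫ ℓ in (-(1/2) : ℝ)..(1/2),
          (lorentzian ε (ω ℓ + ω k) + lorentzian ε (ω ℓ - ω k)) / 2 := by
        rw [← intervalIntegral.integral_div]
        refine intervalIntegral.integral_mono_on (by norm_num)
          ((hint _ (by norm_num) _ (by norm_num)).div_const 2) ?_ ?_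
        · have hP := continuous_lorentzian hε.ne'
          exact (((hP.comp_continuousOn (hω.add continuousOn_const)).add
            (hP.comp_continuousOn (hω.sub continuousOn_const))).div_const 2
            ).intervalIntegrable_of_Icc (by norm_num)
        · intro ℓ _
          have := lorentzian_nonneg hε.le (ω ℓ + ω k)
          linarith
    _ = (jTilde ω (ε - I * ω k)).re := (re_jTilde hω hε.ne' (ω k)).symm

lemma tendsto_two_div_mul_arctan_div {M δ : ℝ} (hM : 0 < M) (hδ : 0 < δ) :
    Tendsto (fun ε => 2 / M * arctan (M * δ / ε)) (𝓝[>] 0) (𝓝 (π / M)) := by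
  have h : Tendsto (fun ε => M * δ / ε) (𝓝[>] 0) atTop := by
    simpa [div_eq_mul_inv] using tendsto_inv_nhdsGT_zero.const_mul_atTop (mul_pos hM hδ)
  rw [show π / M = 2 / M * (π / 2) by ring]
  exact ((tendsto_arctan_atTop.mono_right nhdsWithin_le_nhds).comp h).const_mul (2 / M)

lemma HasDerivAt.eventually_abs_sub_le {f : ℝ → ℝ} {f' x M : ℝ} (hf : HasDerivAt f f' x)
    (hM : |f'| < M) : ∀ᶠ y in 𝓝 x, |f y - f x| ≤ M * |y - x| := by
  filter_upwards [hf.isLittleO.bound (sub_pos.2 hM)] with y hy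
  rw [Real.norm_eq_abs, Real.norm_eq_abs, smul_eq_mul] at hy
  calc |f y - f x| = |(f y - f x - (y - x) * f') + (y - x) * f'| := by rw [sub_add_cancel]
    _ ≤ |f y - f x - (y - x) * f'| + |(y - x) * f'| := abs_add_le _ _
    _ ≤ (M - |f'|) * |y - x| + |y - x| * |f'| := by rw [abs_mul]; gcongr
    _ = M * |y - x| := by ring

lemma HasDerivAt.exists_Icc_abs_sub_le {f : ℝ → ℝ} {f' x M a b : ℝ} (hf : HasDerivAt f f' x)
    (hM : |f'| < M) (hx : x ∈ Ioo a b) :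
    ∃ δ, 0 < δ ∧ a ≤ x - δ ∧ x + δ ≤ b ∧
      ∀ y ∈ Icc (x - δ) (x + δ), |f y - f x| ≤ M * |y - x| := by
  have hsmall : ∀ᶠ δ in 𝓝 (0 : ℝ), δ ≤ x - a ∧ δ ≤ b - x :=
    (eventually_le_nhds (sub_pos.2 hx.1)).and (eventually_le_nhds (sub_pos.2 hx.2))
  obtain ⟨δ, ⟨hball, hδa, hδb⟩, hδ⟩ := ((((eventually_closedBall_subset
    (hf.eventually_abs_sub_le hM)).and hsmall).filter_mono nhdsWithin_le_nhds).and
    (self_mem_nhdsWithin (s := Ioi 0))).exists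
  refine ⟨δ, hδ, by linarith, by linarith, fun y hy => hball ?_⟩
  rwa [Real.closedBall_eq_Icc]

lemma pi_div_le_re_of_tendsto_jTilde {ω : ℝ → ℝ} {ω'k k : ℝ} {ζ : ℂ}
    (hk : k ∈ Ioo (0 : ℝ) (1/2))
    (hω : ContinuousOn ω (Icc (-(1/2)) (1/2)))
    (heven : ∀ ℓ ∈ Icc (-(1/2) : ℝ) (1/2), ω (-ℓ) = ω ℓ) (hderiv : HasDerivAt ω ω'k k)
    (hpos : 0 < ω'k)
    (hlim : Tendsto (fun ε : ℝ => jTilde ω (ε - I * ω k)) (𝓝[>] 0) (𝓝 ζ)) :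
    π / ω'k ≤ ζ.re := by
  have hM : ∀ M, ω'k < M → π / M ≤ ζ.re := by
    intro M hM
    obtain ⟨δ, hδ, hδk, hkδ, hlip⟩ := hderiv.exists_Icc_abs_sub_le (by rwa [abs_of_pos hpos]) hk
    exact le_of_tendsto_of_tendsto (tendsto_two_div_mul_arctan_div (hpos.trans hM) hδ)
      ((Complex.continuous_re.tendsto ζ).comp hlim) (eventually_nhdsWithin_of_forall fun ε hε =>
        le_re_jTilde hω heven hε (hpos.trans hM) hδ.le (by linarith) hkδ hlip)
  have hinv : Tendsto (fun M => π / M) (𝓝[>] ω'k) (𝓝 (π / ω'k)) :=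
    (continuousAt_const.div continuousAt_id hpos.ne').tendsto.mono_left nhdsWithin_le_nhds
  exact le_of_tendsto hinv (eventually_nhdsWithin_of_forall hM)

lemma norm_inv_one_add_mul_le {γ r : ℝ} {ζ : ℂ} (hγ : 0 ≤ γ) (hr : 0 ≤ r) (h : r ≤ ζ.re) :
    ‖(1 + (γ : ℂ) * ζ)⁻¹‖ ≤ (1 + γ * r)⁻¹ := by
  rw [norm_inv]
  refine inv_anti₀ (by positivity) ?_
  calc 1 + γ * r ≤ 1 + γ * ζ.re := by gcongr
    _ = (1 + (γ : ℂ) * ζ).re := by simp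
    _ ≤ ‖1 + (γ : ℂ) * ζ‖ := Complex.re_le_norm _

theorem stmt1_general (ω ω' : ℝ → ℝ) (γ : ℝ) (hγ : 0 < γ) (k : ℝ) (hk : k ∈ Set.Ioo (0:ℝ) (1/2))
    (hcont : ContinuousOn ω (Set.Icc (-(1/2):ℝ) (1/2)))
    (heven : ∀ ℓ ∈ Set.Icc (-(1/2):ℝ) (1/2), ω (-ℓ) = ω ℓ)
    (hderiv : ∀ ℓ ∈ Set.Ioo (0:ℝ) (1/2), HasDerivAt ω (ω' ℓ) ℓ)
    (hpos : ∀ ℓ ∈ Set.Ioo (0:ℝ) (1/2), 0 < ω' ℓ)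
    (ζ : ℂ)
    (hlim : Filter.Tendsto
      (fun ε : ℝ => ∫ ℓ in (-(1/2):ℝ)..(1/2),
        ((ε : ℂ) - Complex.I * (ω k : ℂ)) /
          (((ε : ℂ) - Complex.I * (ω k : ℂ)) ^ 2 + ((ω ℓ : ℝ) : ℂ) ^ 2))
      (nhdsWithin 0 (Set.Ioi 0)) (nhds ζ)) :
    ‖(1 + (γ : ℂ) * ζ)⁻¹‖
      ≤ 2 * |ω' k / (2 * Real.pi)| / (γ + 2 * |ω' k / (2 * Real.pi)|) := by
  have hc := hpos k hk
  calc ‖(1 + (γ : ℂ) * ζ)⁻¹‖ ≤ (1 + γ * (π / ω' k))⁻¹ :=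
        norm_inv_one_add_mul_le hγ.le (by positivity)
          (pi_div_le_re_of_tendsto_jTilde hk hcont heven (hderiv k hk) hc hlim)
    _ = 2 * |ω' k / (2 * π)| / (γ + 2 * |ω' k / (2 * π)|) := by
        rw [abs_of_pos (by positivity)]
        field_simp
        ring

theorem stmt1 (ω ω' : ℝ → ℝ) (γ : ℝ) (hγ : 0 < γ) (k : ℝ) (hk : k ∈ Set.Ioo (0:ℝ) (1/2))
    (hcont : ContinuousOn ω (Set.Icc (-(1/2):ℝ) (1/2)))
    (heven : ∀ ℓ ∈ Set.Icc (-(1/2):ℝ) (1/2), ω (-ℓ) = ω ℓ)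
    (hderiv : ∀ ℓ ∈ Set.Ioo (0:ℝ) (1/2), HasDerivAt ω (ω' ℓ) ℓ)
    (hderivCont : ContinuousOn ω' (Set.Ioo (0:ℝ) (1/2)))
    (hpos : ∀ ℓ ∈ Set.Ioo (0:ℝ) (1/2), 0 < ω' ℓ)
    (ζ : ℂ)
    (hlim : Filter.Tendsto
      (fun ε : ℝ => ∫ ℓ in (-(1/2):ℝ)..(1/2),
        ((ε : ℂ) - Complex.I * (ω k : ℂ)) /
          (((ε : ℂ) - Complex.I * (ω k : ℂ)) ^ 2 + ((ω ℓ : ℝ) : ℂ) ^ 2))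
      (nhdsWithin 0 (Set.Ioi 0)) (nhds ζ)) :
    ‖(1 + (γ : ℂ) * ζ)⁻¹‖
      ≤ 2 * |ω' k / (2 * Real.pi)| / (γ + 2 * |ω' k / (2 * Real.pi)|) :=
  stmt1_general ω ω' γ hγ k hk hcont heven hderiv hpos ζ hlim
end

section
/- Let ω : [-1/2,1/2] → ℝ be a unimodal dispersion relation, let γ > 0, let k ∈ (0,1/2), and suppose that J̃(ε − i·ω(k)) tends to a limit ζ ∈ ℂ as ε → 0+. Then the scattering coefficient ν(k) := (1 + γζ)⁻¹ satisfies Re ν(k) > 0. -/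
/-! For `Re λ > 0` every integrand `λ / (λ² + ω(ℓ)²)` has real part
`Re λ · (|λ|² + ω(ℓ)²) / |λ² + ω(ℓ)²|² ≥ 0`, so `Re J̃(λ) ≥ 0` and hence `Re ζ ≥ 0` in the limit.
Then `Re (1 + γζ) ≥ 1`, and inversion preserves the open right half-plane. -/

open Filter Topology MeasureTheory

namespace Complex

lemma re_div_sq_add_sq (z : ℂ) (w : ℝ) :
    (z / (z ^ 2 + (w : ℂ) ^ 2)).re = z.re * (normSq z + w ^ 2) / normSq (z ^ 2 + (w : ℂ) ^ 2) := by
  simp only [div_re, normSq_apply, add_re, add_im, pow_two, mul_re, mul_im, ofReal_re, ofReal_im]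
  ring

lemma re_div_sq_add_sq_nonneg {z : ℂ} (hz : 0 ≤ z.re) (w : ℝ) :
    0 ≤ (z / (z ^ 2 + (w : ℂ) ^ 2)).re := by
  rw [re_div_sq_add_sq]
  exact div_nonneg (mul_nonneg hz (add_nonneg (normSq_nonneg z) (sq_nonneg w))) (normSq_nonneg _)

lemma inv_re_pos {z : ℂ} (hz : 0 < z.re) : 0 < z⁻¹.re := by
  have hz0 : z ≠ 0 := fun h => by simp [h] at hz
  rw [inv_re]
  exact div_pos hz (normSq_pos.2 hz0)

end Complex

lemma re_integral_nonneg {α : Type*} [MeasurableSpace α] {μ : Measure α} {f : α → ℂ}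
    (hf : ∀ᵐ x ∂μ, 0 ≤ (f x).re) : 0 ≤ (∫ x, f x ∂μ).re := by
  by_cases hint : Integrable f μ
  · rw [← RCLike.re_to_complex, ← integral_re hint]
    exact integral_nonneg_of_ae hf
  · simp [integral_undef hint]

lemma intervalIntegral.re_integral_nonneg {f : ℝ → ℂ} {a b : ℝ} (hab : a ≤ b)
    (hf : ∀ x, 0 ≤ (f x).re) : 0 ≤ (∫ x in a..b, f x).re := by
  rw [intervalIntegral.integral_of_le hab]
  exact _root_.re_integral_nonneg (ae_of_all _ hf)

theorem stmt2_general (ω : ℝ → ℝ) (γ : ℝ) (hγ : 0 < γ) (k : ℝ)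
    (ζ : ℂ)
    (hlim : Filter.Tendsto
      (fun ε : ℝ => ∫ ℓ in (-(1/2):ℝ)..(1/2),
        ((ε : ℂ) - Complex.I * (ω k : ℂ)) /
          (((ε : ℂ) - Complex.I * (ω k : ℂ)) ^ 2 + ((ω ℓ : ℝ) : ℂ) ^ 2))
      (nhdsWithin 0 (Set.Ioi 0)) (nhds ζ)) :
    0 < ((1 + (γ : ℂ) * ζ)⁻¹).re := by
  have hζ : 0 ≤ ζ.re := by
    refine ge_of_tendsto ((Complex.continuous_re.tendsto ζ).comp hlim) ?_
    filter_upwards [self_mem_nhdsWithin] with ε (hε : 0 < ε)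
    exact intervalIntegral.re_integral_nonneg (by norm_num) fun ℓ =>
      Complex.re_div_sq_add_sq_nonneg (by simpa using hε.le) (ω ℓ)
  apply Complex.inv_re_pos
  simp only [Complex.add_re, Complex.one_re, Complex.re_ofReal_mul]
  positivity

theorem stmt2 (ω ω' : ℝ → ℝ) (γ : ℝ) (hγ : 0 < γ) (k : ℝ) (hk : k ∈ Set.Ioo (0:ℝ) (1/2))
    (hcont : ContinuousOn ω (Set.Icc (-(1/2):ℝ) (1/2)))
    (heven : ∀ ℓ ∈ Set.Icc (-(1/2):ℝ) (1/2), ω (-ℓ) = ω ℓ)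
    (hderiv : ∀ ℓ ∈ Set.Ioo (0:ℝ) (1/2), HasDerivAt ω (ω' ℓ) ℓ)
    (hderivCont : ContinuousOn ω' (Set.Ioo (0:ℝ) (1/2)))
    (hpos : ∀ ℓ ∈ Set.Ioo (0:ℝ) (1/2), 0 < ω' ℓ)
    (ζ : ℂ)
    (hlim : Filter.Tendsto
      (fun ε : ℝ => ∫ ℓ in (-(1/2):ℝ)..(1/2),
        ((ε : ℂ) - Complex.I * (ω k : ℂ)) /
          (((ε : ℂ) - Complex.I * (ω k : ℂ)) ^ 2 + ((ω ℓ : ℝ) : ℂ) ^ 2))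
      (nhdsWithin 0 (Set.Ioi 0)) (nhds ζ)) :
    0 < ((1 + (γ : ℂ) * ζ)⁻¹).re :=
  stmt2_general ω γ hγ k ζ hlim
end

section
/- Let ω : [-1/2,1/2] → ℝ be even and continuous with ω(0) = 0, ω(ℓ) > 0 for ℓ ≠ 0, and suppose ω(ℓ)/ℓ → a for some a > 0 as ℓ → 0+. Then ∫_{-1/2}^{1/2} ε/(ε² + ω(ℓ)²) dℓ converges to π/a as ε → 0+. -/
/-!
For `b < a < c` the slope condition squeezes `b ℓ ≤ ω ℓ ≤ c ℓ` on some `(0, r]`, and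
`∫₀ʳ ε / (ε² + (c ℓ)²) dℓ = arctan (c r / ε) / c → π / (2c)`. On `[r, 1/2]` the dispersion
relation is bounded away from `0`, so the integrand is `O(ε)` there. Hence the integral over
`[0, 1/2]` tends to `π / (2a)`, and evenness doubles it.
-/

open Real Filter MeasureTheory Set Topology

lemma integral_div_sq_add_mul_sq {ε c : ℝ} (hε : 0 < ε) (hc : 0 < c) (r : ℝ) :
    ∫ ℓ in (0:ℝ)..r, ε / (ε ^ 2 + (c * ℓ) ^ 2) = arctan (c * r / ε) / c := by
  have hrw : ∀ ℓ : ℝ, ε / (ε ^ 2 + (c * ℓ) ^ 2) = ε⁻¹ * (1 / (1 + (ℓ * (c / ε)) ^ 2)) := by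
    intro ℓ
    field_simp
  simp_rw [hrw]
  rw [intervalIntegral.integral_const_mul,
    intervalIntegral.integral_comp_mul_right (fun x => 1 / (1 + x ^ 2)) (by positivity),
    integral_one_div_one_add_sq, zero_mul, arctan_zero, sub_zero, smul_eq_mul]
  field_simp

lemma tendsto_integral_div_sq_add_mul_sq {c : ℝ} (hc : 0 < c) {r : ℝ} (hr : 0 < r) :
    Tendsto (fun ε => ∫ ℓ in (0:ℝ)..r, ε / (ε ^ 2 + (c * ℓ) ^ 2)) (𝓝[>] 0)
      (𝓝 (π / (2 * c))) := by
  have hatTop : Tendsto (fun ε => c * r / ε) (𝓝[>] 0) atTop := by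
    simpa only [div_eq_mul_inv] using tendsto_inv_nhdsGT_zero.const_mul_atTop (by positivity)
  have harctan := ((tendsto_arctan_atTop.mono_right nhdsWithin_le_nhds).comp hatTop).div_const c
  rw [div_div] at harctan
  refine harctan.congr' ?_
  filter_upwards [self_mem_nhdsWithin] with ε hε
  exact (integral_div_sq_add_mul_sq hε hc r).symm

lemma ContinuousOn.intervalIntegrable_div_sq_add_sq {f : ℝ → ℝ} {r s : ℝ}
    (hf : ContinuousOn f (uIcc r s)) {ε : ℝ} (hε : 0 < ε) :
    IntervalIntegrable (fun ℓ => ε / (ε ^ 2 + f ℓ ^ 2)) volume r s :=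
  (continuousOn_const.div (continuousOn_const.add (hf.pow 2))
    fun ℓ _ => (by positivity : (0:ℝ) < ε ^ 2 + f ℓ ^ 2).ne').intervalIntegrable

lemma tendsto_integral_div_sq_add_sq_of_ne_zero {f : ℝ → ℝ} {r s : ℝ} (hrs : r ≤ s)
    (hf : ContinuousOn f (Icc r s)) (hf0 : ∀ ℓ ∈ Icc r s, f ℓ ≠ 0) :
    Tendsto (fun ε => ∫ ℓ in r..s, ε / (ε ^ 2 + f ℓ ^ 2)) (𝓝[>] 0) (𝓝 0) := by
  rw [← uIcc_of_le hrs] at hf hf0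
  have hbound : ∀ ε > 0,
      ∫ ℓ in r..s, ε / (ε ^ 2 + f ℓ ^ 2) ≤ ε * ∫ ℓ in r..s, (f ℓ ^ 2)⁻¹ := by
    intro ε hε
    rw [← intervalIntegral.integral_const_mul]
    have hinv : IntervalIntegrable (fun ℓ => (f ℓ ^ 2)⁻¹) volume r s :=
      ((hf.pow 2).inv₀ fun ℓ hℓ => pow_ne_zero 2 (hf0 ℓ hℓ)).intervalIntegrable
    refine intervalIntegral.integral_mono_on hrs (hf.intervalIntegrable_div_sq_add_sq hε)
      (hinv.const_mul ε) fun ℓ hℓ => ?_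
    have := hf0 ℓ (uIcc_of_le hrs ▸ hℓ)
    rw [← div_eq_mul_inv]
    gcongr
    exact le_add_of_nonneg_left (sq_nonneg ε)
  have hupper : Tendsto (fun ε => ε * ∫ ℓ in r..s, (f ℓ ^ 2)⁻¹) (𝓝[>] 0) (𝓝 0) := by
    simpa using ((tendsto_id (x := 𝓝 (0:ℝ))).mul_const (∫ ℓ in r..s, (f ℓ ^ 2)⁻¹)).mono_left
      nhdsWithin_le_nhds
  refine tendsto_of_tendsto_of_tendsto_of_le_of_le' tendsto_const_nhds hupper ?_ ?_
  all_goals filter_upwards [self_mem_nhdsWithin] with ε (hε : 0 < ε)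
  · exact intervalIntegral.integral_nonneg hrs fun ℓ _ => by positivity
  · exact hbound ε hε

lemma exists_forall_Ioo_of_eventually_nhdsGT {p : ℝ → Prop} (h : ∀ᶠ ℓ in 𝓝[>] 0, p ℓ) {s : ℝ}
    (hs : 0 < s) : ∃ r ∈ Ioc 0 s, ∀ ℓ ∈ Ioo 0 r, p ℓ := by
  obtain ⟨u, hu, hup⟩ := (nhdsGT_basis (0:ℝ)).eventually_iff.1 h
  exact ⟨min u s, ⟨lt_min hu hs, min_le_right _ _⟩,
    fun ℓ hℓ => hup ⟨hℓ.1, hℓ.2.trans_le (min_le_left _ _)⟩⟩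

section Comparison

variable {f : ℝ → ℝ} {s x : ℝ}

lemma eventually_lt_integral_div_sq_add_sq {c : ℝ} (hc : 0 < c) (hs : 0 < s)
    (hf : ContinuousOn f (Icc 0 s)) (hf0 : ∀ ℓ ∈ Ioc 0 s, 0 ≤ f ℓ)
    (hfc : ∀ᶠ ℓ in 𝓝[>] 0, f ℓ ≤ c * ℓ) (hx : x < π / (2 * c)) :
    ∀ᶠ ε in 𝓝[>] 0, x < ∫ ℓ in (0:ℝ)..s, ε / (ε ^ 2 + f ℓ ^ 2) := by
  obtain ⟨r, ⟨hr, hrs⟩, hfr⟩ := exists_forall_Ioo_of_eventually_nhdsGT hfc hs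
  filter_upwards [(tendsto_integral_div_sq_add_mul_sq hc hr).eventually_const_lt hx,
    self_mem_nhdsWithin] with ε hxε (hε : 0 < ε)
  have hfr' : ContinuousOn f (uIcc 0 r) := hf.mono (by rw [uIcc_of_le hr.le]; gcongr)
  have hfs' : ContinuousOn f (uIcc r s) := hf.mono (by rw [uIcc_of_le hrs]; gcongr)
  calc x < ∫ ℓ in (0:ℝ)..r, ε / (ε ^ 2 + (c * ℓ) ^ 2) := hxε
    _ ≤ ∫ ℓ in (0:ℝ)..r, ε / (ε ^ 2 + f ℓ ^ 2) := by
      refine intervalIntegral.integral_mono_on_of_le_Ioo hr.le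
        ((continuousOn_const.mul continuousOn_id).intervalIntegrable_div_sq_add_sq hε)
        (hfr'.intervalIntegrable_div_sq_add_sq hε) fun ℓ hℓ => ?_
      have := hf0 ℓ ⟨hℓ.1, hℓ.2.le.trans hrs⟩
      gcongr
      exact hfr ℓ hℓ
    _ ≤ (∫ ℓ in (0:ℝ)..r, ε / (ε ^ 2 + f ℓ ^ 2)) + ∫ ℓ in r..s, ε / (ε ^ 2 + f ℓ ^ 2) :=
      le_add_of_nonneg_right (intervalIntegral.integral_nonneg hrs fun ℓ _ => by positivity)
    _ = ∫ ℓ in (0:ℝ)..s, ε / (ε ^ 2 + f ℓ ^ 2) :=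
      intervalIntegral.integral_add_adjacent_intervals (hfr'.intervalIntegrable_div_sq_add_sq hε)
        (hfs'.intervalIntegrable_div_sq_add_sq hε)

lemma eventually_integral_div_sq_add_sq_lt {b : ℝ} (hb : 0 < b) (hs : 0 < s)
    (hf : ContinuousOn f (Icc 0 s)) (hf0 : ∀ ℓ ∈ Ioc 0 s, 0 < f ℓ)
    (hfb : ∀ᶠ ℓ in 𝓝[>] 0, b * ℓ ≤ f ℓ) (hx : π / (2 * b) < x) :
    ∀ᶠ ε in 𝓝[>] 0, ∫ ℓ in (0:ℝ)..s, ε / (ε ^ 2 + f ℓ ^ 2) < x := by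
  obtain ⟨r, ⟨hr, hrs⟩, hfr⟩ := exists_forall_Ioo_of_eventually_nhdsGT hfb hs
  have hfr' : ContinuousOn f (uIcc 0 r) := hf.mono (by rw [uIcc_of_le hr.le]; gcongr)
  have hfs' : ContinuousOn f (Icc r s) := hf.mono (by gcongr)
  have htail := tendsto_integral_div_sq_add_sq_of_ne_zero hrs hfs'
    fun ℓ hℓ => (hf0 ℓ ⟨hr.trans_le hℓ.1, hℓ.2⟩).ne'
  have hsum := (tendsto_integral_div_sq_add_mul_sq hb hr).add htail
  rw [add_zero] at hsum
  filter_upwards [hsum.eventually_lt_const hx, self_mem_nhdsWithin] with ε hεx (hε : 0 < ε)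
  refine lt_of_le_of_lt ?_ hεx
  rw [← intervalIntegral.integral_add_adjacent_intervals (hfr'.intervalIntegrable_div_sq_add_sq hε)
    ((uIcc_of_le hrs ▸ hfs').intervalIntegrable_div_sq_add_sq hε)]
  gcongr
  refine intervalIntegral.integral_mono_on_of_le_Ioo hr.le
    (hfr'.intervalIntegrable_div_sq_add_sq hε)
    ((continuousOn_const.mul continuousOn_id).intervalIntegrable_div_sq_add_sq hε) fun ℓ hℓ => ?_
  have := hfr ℓ hℓ
  have : 0 < b * ℓ := mul_pos hb hℓ.1
  gcongr

theorem tendsto_integral_div_sq_add_sq_of_tendsto_div {a : ℝ} (ha : 0 < a) (hs : 0 < s)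
    (hf : ContinuousOn f (Icc 0 s)) (hf0 : ∀ ℓ ∈ Ioc 0 s, 0 < f ℓ)
    (hslope : Tendsto (fun ℓ => f ℓ / ℓ) (𝓝[>] 0) (𝓝 a)) :
    Tendsto (fun ε => ∫ ℓ in (0:ℝ)..s, ε / (ε ^ 2 + f ℓ ^ 2)) (𝓝[>] 0) (𝓝 (π / (2 * a))) := by
  have hlim : Tendsto (fun c => π / (2 * c)) (𝓝 a) (𝓝 (π / (2 * a))) :=
    tendsto_const_nhds.div (tendsto_id.const_mul 2) (by positivity)
  rw [tendsto_order]
  constructor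
  · intro x hx
    obtain ⟨c, hxc, hac : a < c⟩ :=
      (((hlim.eventually_const_lt hx).filter_mono nhdsWithin_le_nhds).and
        (self_mem_nhdsWithin (s := Ioi a))).exists
    refine eventually_lt_integral_div_sq_add_sq (ha.trans hac) hs hf
      (fun ℓ hℓ => (hf0 ℓ hℓ).le) ?_ hxc
    filter_upwards [hslope.eventually_lt_const hac, self_mem_nhdsWithin] with ℓ h (hℓ : 0 < ℓ)
    exact ((div_lt_iff₀ hℓ).1 h).le
  · intro x hx
    obtain ⟨b, ⟨hbx, hb⟩, hba : b < a⟩ :=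
      ((((hlim.eventually_lt_const hx).and (eventually_gt_nhds ha)).filter_mono
        nhdsWithin_le_nhds).and (self_mem_nhdsWithin (s := Iio a))).exists
    refine eventually_integral_div_sq_add_sq_lt hb hs hf hf0 ?_ hbx
    filter_upwards [hslope.eventually_const_lt hba, self_mem_nhdsWithin] with ℓ h (hℓ : 0 < ℓ)
    exact ((lt_div_iff₀ hℓ).1 h).le

end Comparison

lemma integral_neg_eq_two_mul_integral_of_even {f : ℝ → ℝ} {s : ℝ} (hs : 0 ≤ s)
    (hf : IntervalIntegrable f volume (-s) s) (heven : ∀ ℓ ∈ Icc (-s) s, f (-ℓ) = f ℓ) :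
    ∫ ℓ in -s..s, f ℓ = 2 * ∫ ℓ in (0:ℝ)..s, f ℓ := by
  have hneg : ∫ ℓ in -s..0, f ℓ = ∫ ℓ in (0:ℝ)..s, f ℓ := by
    rw [← neg_zero, ← intervalIntegral.integral_comp_neg, neg_zero]
    refine intervalIntegral.integral_congr fun ℓ hℓ => heven ℓ ?_
    rw [uIcc_of_le hs] at hℓ
    exact ⟨by linarith [hℓ.1], hℓ.2⟩
  have h0 : (0:ℝ) ∈ uIcc (-s) s := by
    rw [uIcc_of_le (by linarith)]
    constructor <;> linarith
  rw [← intervalIntegral.integral_add_adjacent_intervals (hf.mono_set (uIcc_subset_uIcc_left h0))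
    (hf.mono_set (uIcc_subset_uIcc_right h0)), hneg, two_mul]

theorem stmt9_general (ω : ℝ → ℝ) (a : ℝ) (ha : 0 < a)
    (hcont : ContinuousOn ω (Set.Icc (-(1/2):ℝ) (1/2)))
    (heven : ∀ ℓ ∈ Set.Icc (-(1/2):ℝ) (1/2), ω (-ℓ) = ω ℓ)
    (hpos : ∀ ℓ ∈ Set.Icc (-(1/2):ℝ) (1/2), ℓ ≠ 0 → 0 < ω ℓ)
    (hslope : Filter.Tendsto (fun ℓ : ℝ => ω ℓ / ℓ) (nhdsWithin 0 (Set.Ioi 0)) (nhds a)) :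
    Filter.Tendsto
      (fun ε : ℝ => ∫ ℓ in (-(1/2):ℝ)..(1/2), ε / (ε ^ 2 + ω ℓ ^ 2))
      (nhdsWithin 0 (Set.Ioi 0)) (nhds (Real.pi / a)) := by
  have hhalf := tendsto_integral_div_sq_add_sq_of_tendsto_div ha (by norm_num : (0:ℝ) < 1/2)
    (hcont.mono (Icc_subset_Icc (by norm_num) le_rfl))
    (fun ℓ hℓ => hpos ℓ ⟨by linarith [hℓ.1], hℓ.2⟩ hℓ.1.ne') hslope
  have hπ : 2 * (π / (2 * a)) = π / a := by field_simp
  rw [← hπ]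
  refine (hhalf.const_mul 2).congr' ?_
  filter_upwards [self_mem_nhdsWithin] with ε (hε : 0 < ε)
  refine (integral_neg_eq_two_mul_integral_of_even (by norm_num)
    (((uIcc_of_le (by norm_num : (-(1/2):ℝ) ≤ 1/2)).symm ▸ hcont).intervalIntegrable_div_sq_add_sq
      hε) fun ℓ hℓ => ?_).symm
  simp only [heven ℓ hℓ]

/-- For an even continuous acoustic dispersion relation with `ω(ℓ)/ℓ → a > 0`
as `ℓ → 0+`, we have `∫_{-1/2}^{1/2} ε/(ε² + ω(ℓ)²) dℓ → π/a` as `ε → 0+`. -/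
theorem stmt9 (ω : ℝ → ℝ) (a : ℝ) (ha : 0 < a)
    (hcont : ContinuousOn ω (Set.Icc (-(1/2):ℝ) (1/2)))
    (heven : ∀ ℓ ∈ Set.Icc (-(1/2):ℝ) (1/2), ω (-ℓ) = ω ℓ)
    (hzero : ω 0 = 0)
    (hpos : ∀ ℓ ∈ Set.Icc (-(1/2):ℝ) (1/2), ℓ ≠ 0 → 0 < ω ℓ)
    (hslope : Filter.Tendsto (fun ℓ : ℝ => ω ℓ / ℓ) (nhdsWithin 0 (Set.Ioi 0)) (nhds a)) :
    Filter.Tendsto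
      (fun ε : ℝ => ∫ ℓ in (-(1/2):ℝ)..(1/2), ε / (ε ^ 2 + ω ℓ ^ 2))
      (nhdsWithin 0 (Set.Ioi 0)) (nhds (Real.pi / a)) :=
  stmt9_general ω a ha hcont heven hpos hslope
end

section
/- Let ω₀ ≥ 0, ω_a > 0, let k ∈ (0,1/2), and set ω_k := √(ω₀²/2 + ω_a²·sin²(πk)). Then the complex integral ∫_{-1/2}^{1/2} (ε − i·ω_k)/((ε − i·ω_k)² + ω₀²/2 + ω_a²·sin²(πℓ)) dℓ converges, as ε → 0+, to the real number 2ω_k/(ω_a²·sin(2πk)). -/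
/-!
With `w = exp (2πiℓ)` and `z₁ z₂ = 1`, `A + b sin² (πℓ) = -b (w - z₁) (w - z₂) / (4 w)`, so the
integral over a period is a contour integral over the unit circle, and the residue at the root
`z₁` inside the disc gives `∫ (A + b sin² (πℓ))⁻¹ dℓ = (√A √(A + b))⁻¹`, for the square roots with
`‖√A - √(A + b)‖ < ‖√A + √(A + b)‖`. For `λ = ε - iω_k` with `ε > 0`, `A = λ² + ω₀²/2` lies in the
open lower half-plane, where a square root with values in the fourth quadrant is continuous up to
the real axis; so the limit `ε → 0+` is the value of the formula at `λ = -iω_k`, where the two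
square roots are `-iω_a sin (πk)` and `ω_a cos (πk)`.
-/

open Complex Metric
open scoped Real

theorem circleIntegral_eq_two_pi_I_mul_intervalIntegral (f : ℂ → ℂ) :
    (∮ w in C(0, 1), f w) =
      2 * π * I * ∫ ℓ in (-(1/2) : ℝ)..(1/2), exp (2 * π * I * ℓ) * f (exp (2 * π * I * ℓ)) := by
  set g : ℝ → ℂ := fun θ => I * (exp (θ * I) * f (exp (θ * I))) with hg
  have hper : Function.Periodic g (2 * π) := by
    intro θ
    simp only [hg]
    rw [show ((θ + 2 * π : ℝ) : ℂ) * I = θ * I + 2 * π * I by push_cast; ring, exp_periodic]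
  have hcircle : (∮ w in C(0, 1), f w) = ∫ θ in (-π)..(-π + 2 * π), g θ := by
    rw [← hper.intervalIntegral_add_eq 0 (-π), zero_add, circleIntegral]
    simp only [deriv_circleMap, circleMap_zero, ofReal_one, one_mul, smul_eq_mul, hg]
    congr 1 with θ
    ring
  have hscale : (∫ ℓ in (-(1/2) : ℝ)..(1/2), g (2 * π * ℓ)) =
      (2 * π)⁻¹ • ∫ θ in (-π)..(-π + 2 * π), g θ := by
    rw [intervalIntegral.integral_comp_mul_left _ (by positivity)]
    congr 2 <;> ring
  have hg' : (fun ℓ : ℝ => g (2 * π * ℓ)) =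
      fun ℓ : ℝ => I * (exp (2 * π * I * ℓ) * f (exp (2 * π * I * ℓ))) := by
    ext ℓ
    simp only [hg]
    push_cast
    ring_nf
  rw [hg', intervalIntegral.integral_const_mul, ← hcircle, Complex.real_smul] at hscale
  rw [mul_assoc, hscale]
  push_cast
  field_simp

theorem intervalIntegral_exp_mul_inv_sub_mul_inv_sub {z₁ z₂ : ℂ} (h₁ : ‖z₁‖ < 1) (h₂ : 1 < ‖z₂‖) :
    ∫ ℓ in (-(1/2) : ℝ)..(1/2), exp (2 * π * I * ℓ) *
      ((exp (2 * π * I * ℓ) - z₁)⁻¹ * (exp (2 * π * I * ℓ) - z₂)⁻¹) = (z₁ - z₂)⁻¹ := by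
  have hdiff : DifferentiableOn ℂ (fun w => (w - z₂)⁻¹) (closedBall 0 1) := by
    refine DifferentiableOn.inv (by fun_prop) fun w hw h => ?_
    rw [sub_eq_zero] at h
    rw [mem_closedBall_zero_iff, h] at hw
    linarith
  have hcauchy := hdiff.circleIntegral_sub_inv_smul (mem_ball_zero_iff.mpr h₁)
  simp only [smul_eq_mul] at hcauchy
  rwa [circleIntegral_eq_two_pi_I_mul_intervalIntegral, mul_right_inj' two_pi_I_ne_zero] at hcauchy

theorem ofReal_sin_pi_mul_sq (x : ℝ) :
    (Real.sin (π * x) : ℂ) ^ 2 = (2 - exp (2 * π * I * x) - (exp (2 * π * I * x))⁻¹) / 4 := by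
  have he : exp (2 * π * I * x) = exp (π * x * I) ^ 2 := by
    rw [← exp_nat_mul]; push_cast; ring_nf
  rw [ofReal_sin, he, Complex.sin]
  push_cast
  rw [neg_mul, exp_neg]
  field_simp
  ring_nf
  rw [I_sq]
  ring

theorem intervalIntegral_inv_add_mul_sin_sq {A b v₁ v₂ : ℂ} (hb : b ≠ 0) (h₁ : v₁ ^ 2 = A)
    (h₂ : v₂ ^ 2 = A + b) (hv : ‖v₁ - v₂‖ < ‖v₁ + v₂‖) :
    ∫ ℓ in (-(1/2) : ℝ)..(1/2), (A + b * (Real.sin (π * ℓ) : ℂ) ^ 2)⁻¹ = (v₁ * v₂)⁻¹ := by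
  set z₁ := (v₁ - v₂) ^ 2 / b
  set z₂ := (v₁ + v₂) ^ 2 / b
  have hprod : z₁ * z₂ = 1 := by
    simp only [z₁, z₂]; field_simp; linear_combination (v₁ ^ 2 - v₂ ^ 2 - b) * (h₁ - h₂)
  have hsum : b * (z₁ + z₂) = 4 * A + 2 * b := by
    simp only [z₁, z₂]; field_simp; linear_combination 2 * h₁ + 2 * h₂
  have hnorm_mul : ‖z₁‖ * ‖z₂‖ = 1 := by rw [← norm_mul, hprod, norm_one]
  have hnorm : ‖z₁‖ < ‖z₂‖ := by
    simp only [z₁, z₂, norm_div, norm_pow]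
    gcongr
  have hz₁ : ‖z₁‖ < 1 := by nlinarith [norm_nonneg z₁]
  have hz₂ : 1 < ‖z₂‖ := by nlinarith [norm_nonneg z₁]
  have hintegrand : ∀ ℓ : ℝ, (A + b * (Real.sin (π * ℓ) : ℂ) ^ 2)⁻¹ =
      -4 / b * (exp (2 * π * I * ℓ) *
        ((exp (2 * π * I * ℓ) - z₁)⁻¹ * (exp (2 * π * I * ℓ) - z₂)⁻¹)) := by
    intro ℓ
    rw [ofReal_sin_pi_mul_sq]
    set w := exp (2 * π * I * ℓ)
    have hw₀ : w ≠ 0 := exp_ne_zero _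
    have hw : ‖w‖ = 1 := by rw [norm_exp]; simp
    have hw₁ : w - z₁ ≠ 0 := fun h => by rw [sub_eq_zero.mp h] at hw; linarith
    have hw₂ : w - z₂ ≠ 0 := fun h => by rw [sub_eq_zero.mp h] at hw; linarith
    have hfactor : A + b * ((2 - w - w⁻¹) / 4) = -(b * (w - z₁) * (w - z₂)) / (4 * w) := by
      field_simp
      linear_combination (-w) * hsum + b * hprod
    rw [hfactor]
    field_simp
  simp only [hintegrand]
  rw [intervalIntegral.integral_const_mul, intervalIntegral_exp_mul_inv_sub_mul_inv_sub hz₁ hz₂]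
  rw [show z₁ - z₂ = -4 / b * (v₁ * v₂) by simp only [z₁, z₂]; ring, mul_inv, ← mul_assoc,
    mul_inv_cancel₀ (div_ne_zero (by norm_num) hb), one_mul]

/-- A square root on the closed lower half-plane, unlike the principal branch continuous across
the negative real axis. -/
noncomputable def lowerSqrt (z : ℂ) : ℂ :=
  Real.sqrt ((‖z‖ + z.re) / 2) - I * Real.sqrt ((‖z‖ - z.re) / 2)

theorem lowerSqrt_re (z : ℂ) : (lowerSqrt z).re = Real.sqrt ((‖z‖ + z.re) / 2) := by
  simp [lowerSqrt]

theorem lowerSqrt_im (z : ℂ) : (lowerSqrt z).im = -Real.sqrt ((‖z‖ - z.re) / 2) := by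
  simp [lowerSqrt]

theorem continuous_lowerSqrt : Continuous lowerSqrt := by
  unfold lowerSqrt
  fun_prop

theorem lowerSqrt_sq {z : ℂ} (hz : z.im ≤ 0) : lowerSqrt z ^ 2 = z := by
  have hre := abs_le.mp (abs_re_le_norm z)
  have hp := Real.mul_self_sqrt (by linarith : 0 ≤ (‖z‖ + z.re) / 2)
  have hm := Real.mul_self_sqrt (by linarith : 0 ≤ (‖z‖ - z.re) / 2)
  have hpm : Real.sqrt ((‖z‖ + z.re) / 2) * Real.sqrt ((‖z‖ - z.re) / 2) = -z.im / 2 := by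
    rw [← Real.sqrt_mul (by linarith), ← Real.sqrt_sq (by linarith : 0 ≤ -z.im / 2)]
    congr 1
    linear_combination (sq_norm_sub_sq_re z) / 4
  apply Complex.ext
  · simp only [sq, mul_re, lowerSqrt_re, lowerSqrt_im]
    linear_combination hp - hm
  · simp only [sq, mul_im, lowerSqrt_re, lowerSqrt_im]
    linear_combination -2 * hpm

theorem lowerSqrt_re_pos_and_im_neg {z : ℂ} (hz : z.im < 0) :
    0 < (lowerSqrt z).re ∧ (lowerSqrt z).im < 0 := by
  have hre := abs_lt.mp (abs_re_lt_norm.mpr hz.ne)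
  rw [lowerSqrt_re, lowerSqrt_im, neg_lt_zero, Real.sqrt_pos, Real.sqrt_pos]
  constructor <;> linarith

theorem lowerSqrt_ofReal_of_nonneg {x : ℝ} (hx : 0 ≤ x) : lowerSqrt x = Real.sqrt x := by
  simp [lowerSqrt, abs_of_nonneg hx]

theorem lowerSqrt_ofReal_of_nonpos {x : ℝ} (hx : x ≤ 0) : lowerSqrt x = -I * Real.sqrt (-x) := by
  simp [lowerSqrt, abs_of_nonpos hx, show (-x - x) / 2 = -x by ring]

theorem lowerSqrt_ne_zero {z : ℂ} (hz : z.im ≤ 0) (h : z ≠ 0) : lowerSqrt z ≠ 0 := fun h0 =>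
  h (by rw [← lowerSqrt_sq hz, h0, zero_pow two_ne_zero])

theorem norm_sub_lt_norm_add_of_inner_pos {F : Type*} [NormedAddCommGroup F]
    [InnerProductSpace ℝ F] {x y : F} (h : 0 < inner ℝ x y) : ‖x - y‖ < ‖x + y‖ := by
  have := norm_sub_sq_real x y
  have := norm_add_sq_real x y
  exact (pow_lt_pow_iff_left₀ (norm_nonneg _) (norm_nonneg _) two_ne_zero).mp (by linarith)

theorem intervalIntegral_inv_add_mul_sin_sq_of_im_neg {A : ℂ} {b : ℝ} (hb : b ≠ 0) (hA : A.im < 0) :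
    ∫ ℓ in (-(1/2) : ℝ)..(1/2), (A + b * (Real.sin (π * ℓ) : ℂ) ^ 2)⁻¹ =
      (lowerSqrt A * lowerSqrt (A + b))⁻¹ := by
  have hAb : (A + b).im < 0 := by simpa using hA
  obtain ⟨hre₁, him₁⟩ := lowerSqrt_re_pos_and_im_neg hA
  obtain ⟨hre₂, him₂⟩ := lowerSqrt_re_pos_and_im_neg hAb
  refine intervalIntegral_inv_add_mul_sin_sq (ofReal_ne_zero.mpr hb) (lowerSqrt_sq hA.le)
    (lowerSqrt_sq hAb.le) (norm_sub_lt_norm_add_of_inner_pos ?_)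
  rw [Complex.inner, mul_re, conj_re, conj_im]
  nlinarith [mul_pos hre₁ hre₂, mul_pos_of_neg_of_neg him₁ him₂]

theorem tendsto_intervalIntegral_div_sq_add_sin_sq {a b ω : ℝ} (hb : b ≠ 0) (hω : 0 < ω)
    (h₁ : a - ω ^ 2 ≠ 0) (h₂ : a - ω ^ 2 + b ≠ 0) :
    Filter.Tendsto (fun ε : ℝ => ∫ ℓ in (-(1/2) : ℝ)..(1/2),
        ((ε : ℂ) - I * ω) / (((ε : ℂ) - I * ω) ^ 2 + ((a + b * Real.sin (π * ℓ) ^ 2 : ℝ) : ℂ)))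
      (nhdsWithin 0 (Set.Ioi 0))
      (nhds (-I * ω * (lowerSqrt ↑(a - ω ^ 2) * lowerSqrt ↑(a - ω ^ 2 + b))⁻¹)) := by
  set A : ℝ → ℂ := fun ε => ((ε : ℂ) - I * ω) ^ 2 + a
  set F : ℝ → ℂ := fun ε => ((ε : ℂ) - I * ω) * (lowerSqrt (A ε) * lowerSqrt (A ε + b))⁻¹
  have hintegral : ∀ ε ∈ Set.Ioi (0 : ℝ), F ε = ∫ ℓ in (-(1/2) : ℝ)..(1/2),
      ((ε : ℂ) - I * ω) / (((ε : ℂ) - I * ω) ^ 2 + ((a + b * Real.sin (π * ℓ) ^ 2 : ℝ) : ℂ)) := by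
    intro ε hε
    have hA : (A ε).im < 0 := by
      simp only [A, add_im, ofReal_im, add_zero, sq, mul_im, sub_re, sub_im, ofReal_re,
        mul_re, I_re, I_im]
      nlinarith [mul_pos (Set.mem_Ioi.mp hε) hω]
    have hintegrand : ∀ ℓ : ℝ, ((ε : ℂ) - I * ω) /
        (((ε : ℂ) - I * ω) ^ 2 + ((a + b * Real.sin (π * ℓ) ^ 2 : ℝ) : ℂ)) =
        ((ε : ℂ) - I * ω) * (A ε + b * (Real.sin (π * ℓ) : ℂ) ^ 2)⁻¹ := by
      intro ℓ
      simp only [A]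
      push_cast
      ring
    simp only [hintegrand]
    rw [intervalIntegral.integral_const_mul, intervalIntegral_inv_add_mul_sin_sq_of_im_neg hb hA]
  have hA₀ : A 0 = ↑(a - ω ^ 2) := by
    simp only [A]
    push_cast
    linear_combination (ω : ℂ) ^ 2 * I_sq
  have hF₀ : F 0 = -I * ω * (lowerSqrt ↑(a - ω ^ 2) * lowerSqrt ↑(a - ω ^ 2 + b))⁻¹ := by
    simp only [F, hA₀, ofReal_zero, zero_sub, neg_mul, ofReal_add]
  have hF : ContinuousAt F 0 := by
    have hne : lowerSqrt (A 0) * lowerSqrt (A 0 + b) ≠ 0 := by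
      rw [hA₀, ← ofReal_add]
      exact mul_ne_zero (lowerSqrt_ne_zero (ofReal_im _).le (ofReal_ne_zero.mpr h₁))
        (lowerSqrt_ne_zero (ofReal_im _).le (ofReal_ne_zero.mpr h₂))
    have := continuous_lowerSqrt
    simp only [F]
    fun_prop (disch := assumption)
  rw [← hF₀]
  exact (hF.tendsto.mono_left nhdsWithin_le_nhds).congr' (eventually_nhdsWithin_of_forall hintegral)

theorem stmt11_general (ω₀ ωa : ℝ) (hωa : 0 < ωa) (k : ℝ)
    (hk : k ∈ Set.Ioo (0:ℝ) (1/2)) :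
    Filter.Tendsto
      (fun ε : ℝ => ∫ ℓ in (-(1/2):ℝ)..(1/2),
        ((ε : ℂ) - Complex.I * (Real.sqrt (ω₀ ^ 2 / 2 + ωa ^ 2 * Real.sin (Real.pi * k) ^ 2) : ℂ)) /
          (((ε : ℂ) - Complex.I * (Real.sqrt (ω₀ ^ 2 / 2 + ωa ^ 2 * Real.sin (Real.pi * k) ^ 2) : ℂ)) ^ 2
            + ((ω₀ ^ 2 / 2 + ωa ^ 2 * Real.sin (Real.pi * ℓ) ^ 2 : ℝ) : ℂ)))
      (nhdsWithin 0 (Set.Ioi 0))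
      (nhds ((2 * Real.sqrt (ω₀ ^ 2 / 2 + ωa ^ 2 * Real.sin (Real.pi * k) ^ 2)
        / (ωa ^ 2 * Real.sin (2 * Real.pi * k)) : ℝ) : ℂ)) := by
  obtain ⟨hk₀, hk₁⟩ := hk
  set s := Real.sin (π * k)
  set c := Real.cos (π * k)
  have hs : 0 < s := Real.sin_pos_of_pos_of_lt_pi (by positivity) (by nlinarith [Real.pi_pos])
  have hc : 0 < c :=
    Real.cos_pos_of_mem_Ioo ⟨by nlinarith [Real.pi_pos], by nlinarith [Real.pi_pos]⟩
  have hsin : Real.sin (2 * π * k) = 2 * s * c := by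
    rw [show 2 * π * k = 2 * (π * k) by ring, Real.sin_two_mul]
  set ωk := Real.sqrt (ω₀ ^ 2 / 2 + ωa ^ 2 * s ^ 2)
  have hωk : 0 < ωk := Real.sqrt_pos.mpr (by positivity)
  have hωk_sq : ωk ^ 2 = ω₀ ^ 2 / 2 + ωa ^ 2 * s ^ 2 := Real.sq_sqrt (by positivity)
  have h₁ : ω₀ ^ 2 / 2 - ωk ^ 2 = -(ωa * s) ^ 2 := by rw [hωk_sq]; ring
  have h₂ : ω₀ ^ 2 / 2 - ωk ^ 2 + ωa ^ 2 = (ωa * c) ^ 2 := by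
    rw [h₁]; linear_combination -ωa ^ 2 * Real.sin_sq_add_cos_sq (π * k)
  have hlim := tendsto_intervalIntegral_div_sq_add_sin_sq (a := ω₀ ^ 2 / 2)
    (pow_ne_zero 2 hωa.ne') hωk (by rw [h₁]; exact neg_ne_zero.mpr (by positivity))
    (by rw [h₂]; positivity)
  rw [h₂, h₁, lowerSqrt_ofReal_of_nonpos (by nlinarith),
    lowerSqrt_ofReal_of_nonneg (by positivity), neg_neg, Real.sqrt_sq (by positivity),
    Real.sqrt_sq (by positivity)] at hlim
  convert hlim using 2
  rw [hsin]
  push_cast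
  field_simp

/-- For the nearest-neighbor chain, `J̃(ε - i ω_k)` converges, as `ε → 0+`,
to `2ω_k/(ω_a² sin(2πk))`, where `ω_k = √(ω₀²/2 + ω_a² sin²(πk))` and `k ∈ (0,1/2)`. -/
theorem stmt11 (ω₀ ωa : ℝ) (hω₀ : 0 ≤ ω₀) (hωa : 0 < ωa) (k : ℝ)
    (hk : k ∈ Set.Ioo (0:ℝ) (1/2)) :
    Filter.Tendsto
      (fun ε : ℝ => ∫ ℓ in (-(1/2):ℝ)..(1/2),
        ((ε : ℂ) - Complex.I * (Real.sqrt (ω₀ ^ 2 / 2 + ωa ^ 2 * Real.sin (Real.pi * k) ^ 2) : ℂ)) /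
          (((ε : ℂ) - Complex.I * (Real.sqrt (ω₀ ^ 2 / 2 + ωa ^ 2 * Real.sin (Real.pi * k) ^ 2) : ℂ)) ^ 2
            + ((ω₀ ^ 2 / 2 + ωa ^ 2 * Real.sin (Real.pi * ℓ) ^ 2 : ℝ) : ℂ)))
      (nhdsWithin 0 (Set.Ioi 0))
      (nhds ((2 * Real.sqrt (ω₀ ^ 2 / 2 + ωa ^ 2 * Real.sin (Real.pi * k) ^ 2)
        / (ωa ^ 2 * Real.sin (2 * Real.pi * k)) : ℝ) : ℂ)) :=
  stmt11_general ω₀ ωa hωa k hk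
end

section
/- Let γ > 0, ω₀ ≥ 0, ω_a > 0, let k ∈ (0,1/2), and set ω_k := √(ω₀²/2 + ω_a²·sin²(πk)). Then the scattering coefficient, i.e. the limit as ε → 0+ of (1 + γ·∫_{-1/2}^{1/2} (ε − i·ω_k)/((ε − i·ω_k)² + ω₀²/2 + ω_a²·sin²(πℓ)) dℓ)⁻¹, exists and equals ν(k) = ω_a²·sin(2πk)/(ω_a²·sin(2πk) + 2γ·√(ω₀²/2 + ω_a²·sin²(πk))). -/
/-!
Put `c = λ² + ω₀²/2`. Since `cos² + sin² = 1`, the integrand of `J̃(λ)` is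
`λ / (c cos²(πℓ) + (c + ω_a²) sin²(πℓ))`, so everything rests on the identity
`∫_{-1/2}^{1/2} dℓ / (cos²(πℓ) + w² sin²(πℓ)) = 1/w` for `Re w > 0`. It holds because
`log (cos πℓ + i w sin πℓ) - log (cos πℓ - i w sin πℓ)` is an antiderivative of
`2πi w / (cos² πℓ + w² sin² πℓ)` that never meets the branch cut on `[-1/2, 1/2]` and increases by
`2πi` across it. Hence `J̃(λ) = λ / (p q)` for any roots `p² = c`, `q² = c + ω_a²` with
`Re (q/p) > 0`. At `λ = ε - i ω_k` the number `c` lies in the lower half-plane and tends to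
`-ω_a² sin²(πk)` as `ε → 0+`, while `c + ω_a²` tends to `ω_a² cos²(πk)`; with `p = -i √(-c)` and
`q = √(c + ω_a²)` both roots stay away from the branch cut, so
`J̃(ε - i ω_k) → ω_k / (ω_a² sin(πk) cos(πk))`, which gives `ν(k)`.
-/

open Complex Set Filter Topology
open scoped Real

namespace Complex

lemma sq_sqrt (z : ℂ) : sqrt z ^ 2 = z := cpow_ofNat_inv_pow z 2

lemma sqrt_sq {z : ℂ} (hz : 0 < z.re) : sqrt (z ^ 2) = z := sq_cpow_two_inv hz

lemma re_sqrt_pos {z : ℂ} (hz : z.im ≠ 0) : 0 < (sqrt z).re := by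
  rw [sqrt, cpow_inv_two_re]
  have := abs_re_lt_norm.mpr hz
  exact Real.sqrt_pos.mpr (by linarith [neg_abs_le z.re])

lemma im_sqrt_pos {z : ℂ} (hz : 0 < z.im) : 0 < (sqrt z).im := by
  rw [sqrt, cpow_inv_two_im_eq_sqrt hz.le]
  have := abs_re_lt_norm.mpr hz.ne'
  exact Real.sqrt_pos.mpr (by linarith [le_abs_self z.re])

lemma im_sqrt_neg {z : ℂ} (hz : z.im < 0) : (sqrt z).im < 0 := by
  rw [sqrt, cpow_inv_two_im_eq_neg_sqrt hz, neg_lt_zero]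
  have := abs_re_lt_norm.mpr hz.ne
  exact Real.sqrt_pos.mpr (by linarith [le_abs_self z.re])

lemma log_sub_log_neg_of_im_pos {z : ℂ} (hz : 0 < z.im) : log z - log (-z) = π * I := by
  apply Complex.ext <;> simp [log_re, log_im, arg_neg_eq_arg_sub_pi_of_im_pos hz]

lemma ofReal_sin_sq_add_ofReal_cos_sq (x : ℝ) :
    (Real.sin x : ℂ) ^ 2 + (Real.cos x : ℂ) ^ 2 = 1 := by
  exact_mod_cast Real.sin_sq_add_cos_sq x

end Complex

noncomputable def cosAddIMulSin (w : ℂ) (ℓ : ℝ) : ℂ :=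
  Real.cos (π * ℓ) + I * w * Real.sin (π * ℓ)

section

variable {w : ℂ} {ℓ : ℝ}

lemma cosAddIMulSin_re (w : ℂ) (ℓ : ℝ) :
    (cosAddIMulSin w ℓ).re = Real.cos (π * ℓ) - w.im * Real.sin (π * ℓ) := by
  simp only [cosAddIMulSin, add_re, mul_re, I_re, I_im, ofReal_re, ofReal_im]
  ring

lemma cosAddIMulSin_im (w : ℂ) (ℓ : ℝ) :
    (cosAddIMulSin w ℓ).im = w.re * Real.sin (π * ℓ) := by
  simp only [cosAddIMulSin, add_im, mul_im, mul_re, I_re, I_im, ofReal_re, ofReal_im]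
  ring

lemma cosAddIMulSin_mem_slitPlane (hw : w.re ≠ 0) (hℓ : ℓ ∈ Icc (-(1/2) : ℝ) (1/2)) :
    cosAddIMulSin w ℓ ∈ slitPlane := by
  have hcos : 0 ≤ Real.cos (π * ℓ) :=
    Real.cos_nonneg_of_mem_Icc ⟨by nlinarith [Real.pi_pos, hℓ.1], by nlinarith [Real.pi_pos, hℓ.2]⟩
  rw [mem_slitPlane_iff, cosAddIMulSin_re, cosAddIMulSin_im]
  by_cases hsin : Real.sin (π * ℓ) = 0
  · left
    have := Real.sin_sq_add_cos_sq (π * ℓ)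
    rw [hsin] at this ⊢
    nlinarith
  · exact Or.inr (mul_ne_zero hw hsin)

lemma hasDerivAt_cosAddIMulSin (w : ℂ) (ℓ : ℝ) :
    HasDerivAt (cosAddIMulSin w)
      (π * (-Real.sin (π * ℓ) + I * w * Real.cos (π * ℓ))) ℓ := by
  have hsin := ((Real.hasDerivAt_sin (π * ℓ)).comp ℓ ((hasDerivAt_id ℓ).const_mul π)).ofReal_comp
  have hcos := ((Real.hasDerivAt_cos (π * ℓ)).comp ℓ ((hasDerivAt_id ℓ).const_mul π)).ofReal_comp
  refine (hcos.add (hsin.const_mul (I * w))).congr_deriv ?_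
  push_cast
  ring

lemma cosAddIMulSin_mul_cosAddIMulSin_neg (w : ℂ) (ℓ : ℝ) :
    cosAddIMulSin w ℓ * cosAddIMulSin (-w) ℓ
      = (Real.cos (π * ℓ) : ℂ) ^ 2 + w ^ 2 * (Real.sin (π * ℓ) : ℂ) ^ 2 := by
  simp only [cosAddIMulSin]
  linear_combination (-(w ^ 2) * (Real.sin (π * ℓ) : ℂ) ^ 2) * I_sq

lemma cosAddIMulSin_half (w : ℂ) : cosAddIMulSin w (1/2) = I * w := by
  rw [cosAddIMulSin, mul_one_div, Real.cos_pi_div_two, Real.sin_pi_div_two]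
  push_cast
  ring

lemma cosAddIMulSin_neg_half (w : ℂ) : cosAddIMulSin w (-(1/2)) = -(I * w) := by
  rw [cosAddIMulSin, mul_neg, mul_one_div, Real.cos_neg, Real.sin_neg, Real.cos_pi_div_two,
    Real.sin_pi_div_two]
  push_cast
  ring

lemma hasDerivAt_log_cosAddIMulSin_sub (hw : w.re ≠ 0) (hℓ : ℓ ∈ Icc (-(1/2) : ℝ) (1/2)) :
    HasDerivAt (fun x => log (cosAddIMulSin w x) - log (cosAddIMulSin (-w) x))
      (2 * π * I * w * ((Real.cos (π * ℓ) : ℂ) ^ 2 + w ^ 2 * (Real.sin (π * ℓ) : ℂ) ^ 2)⁻¹) ℓ := by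
  have hN := cosAddIMulSin_mem_slitPlane hw hℓ
  have hD := cosAddIMulSin_mem_slitPlane (w := -w) (by simpa using hw) hℓ
  refine (((hasDerivAt_cosAddIMulSin w ℓ).clog_real hN).sub
    ((hasDerivAt_cosAddIMulSin (-w) ℓ).clog_real hD)).congr_deriv ?_
  rw [← cosAddIMulSin_mul_cosAddIMulSin_neg, div_sub_div _ _ (slitPlane_ne_zero hN)
    (slitPlane_ne_zero hD), div_eq_mul_inv]
  congr 1
  simp only [cosAddIMulSin]
  linear_combination (2 * π * I * w) * ofReal_sin_sq_add_ofReal_cos_sq (π * ℓ)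

theorem integral_inv_cos_sq_add_mul_sin_sq (hw : 0 < w.re) :
    ∫ ℓ in (-(1/2) : ℝ)..(1/2),
      ((Real.cos (π * ℓ) : ℂ) ^ 2 + w ^ 2 * (Real.sin (π * ℓ) : ℂ) ^ 2)⁻¹ = w⁻¹ := by
  have hIcc : uIcc (-(1/2) : ℝ) (1/2) = Icc (-(1/2)) (1/2) := uIcc_of_le (by norm_num)
  have hint : IntervalIntegrable
      (fun ℓ : ℝ => ((Real.cos (π * ℓ) : ℂ) ^ 2 + w ^ 2 * (Real.sin (π * ℓ) : ℂ) ^ 2)⁻¹)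
      MeasureTheory.volume (-(1/2)) (1/2) := by
    refine ContinuousOn.intervalIntegrable (ContinuousOn.inv₀ (by fun_prop) fun ℓ hℓ => ?_)
    rw [hIcc] at hℓ
    rw [← cosAddIMulSin_mul_cosAddIMulSin_neg]
    exact mul_ne_zero (slitPlane_ne_zero (cosAddIMulSin_mem_slitPlane hw.ne' hℓ))
      (slitPlane_ne_zero (cosAddIMulSin_mem_slitPlane (w := -w) (by simpa using hw.ne') hℓ))
  have hFTC := intervalIntegral.integral_eq_sub_of_hasDerivAt
    (fun ℓ hℓ => hasDerivAt_log_cosAddIMulSin_sub hw.ne' (hIcc ▸ hℓ)) (hint.const_mul _)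
  have hlog : log (I * w) - log (-(I * w)) = π * I :=
    log_sub_log_neg_of_im_pos (by simpa using hw)
  rw [intervalIntegral.integral_const_mul, cosAddIMulSin_half, cosAddIMulSin_half,
    cosAddIMulSin_neg_half, cosAddIMulSin_neg_half, mul_neg, neg_neg] at hFTC
  have hpi : (π : ℂ) ≠ 0 := ofReal_ne_zero.mpr Real.pi_ne_zero
  refine eq_inv_of_mul_eq_one_left (mul_left_cancel₀ (by simp [hpi] : 2 * π * I ≠ 0) ?_)
  linear_combination hFTC + 2 * hlog

end

theorem integral_inv_add_mul_sin_sq {b c p q : ℂ} (hp : p ^ 2 = c) (hq : q ^ 2 = c + b)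
    (hpq : 0 < (q / p).re) :
    ∫ ℓ in (-(1/2) : ℝ)..(1/2), (c + b * (Real.sin (π * ℓ) : ℂ) ^ 2)⁻¹ = (p * q)⁻¹ := by
  have hp0 : p ≠ 0 := fun h => by simp [h] at hpq
  have hfactor : ∀ ℓ : ℝ, (c + b * (Real.sin (π * ℓ) : ℂ) ^ 2)⁻¹
      = (p ^ 2)⁻¹ * ((Real.cos (π * ℓ) : ℂ) ^ 2 + (q / p) ^ 2 * (Real.sin (π * ℓ) : ℂ) ^ 2)⁻¹ := by
    intro ℓ
    rw [← mul_inv, mul_add, div_pow, ← mul_assoc, mul_div_cancel₀ _ (pow_ne_zero 2 hp0)]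
    congr 1
    linear_combination (-c) * ofReal_sin_sq_add_ofReal_cos_sq (π * ℓ)
      - (Real.cos (π * ℓ) : ℂ) ^ 2 * hp - (Real.sin (π * ℓ) : ℂ) ^ 2 * hq
  simp_rw [hfactor]
  rw [intervalIntegral.integral_const_mul, integral_inv_cos_sq_add_mul_sin_sq hpq]
  field_simp

lemma re_sqrt_div_neg_I_mul_sqrt_neg_pos {z u : ℂ} (hz : z.im < 0) (hu : u.im < 0) :
    0 < (sqrt u / (-I * sqrt (-z))).re := by
  have hz' : 0 < (-z).im := by simpa using hz
  have h1 := re_sqrt_pos hu.ne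
  have h2 := im_sqrt_neg hu
  have h3 := re_sqrt_pos hz'.ne'
  have h4 := im_sqrt_pos hz'
  have hr : sqrt (-z) ≠ 0 := fun h => by simp [h] at h3
  rw [div_re, ← add_div]
  refine div_pos ?_ (normSq_pos.mpr (mul_ne_zero (by simp) hr))
  simp only [mul_re, mul_im, neg_re, neg_im, I_re, I_im]
  nlinarith

theorem integral_div_sq_add_eq {a b : ℝ} {z : ℂ} (hz : (z ^ 2 + a).im < 0) :
    ∫ ℓ in (-(1/2) : ℝ)..(1/2), z / (z ^ 2 + ((a + b * Real.sin (π * ℓ) ^ 2 : ℝ) : ℂ))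
      = z / ((-I * sqrt (-(z ^ 2 + a))) * sqrt (z ^ 2 + a + b)) := by
  have hp : (-I * sqrt (-(z ^ 2 + a))) ^ 2 = z ^ 2 + a := by
    rw [mul_pow, sq_sqrt]
    simp
  have hpq := re_sqrt_div_neg_I_mul_sqrt_neg_pos hz (u := z ^ 2 + a + b) (by simpa using hz)
  simp_rw [div_eq_mul_inv z, ofReal_add, ofReal_mul, ofReal_pow, ← add_assoc]
  rw [intervalIntegral.integral_const_mul, integral_inv_add_mul_sin_sq hp (sq_sqrt _) hpq]

lemma tendsto_div_neg_I_mul_sqrt_mul_sqrt {a b p q : ℝ} {z₀ : ℂ} (hp : 0 < p) (hq : 0 < q)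
    (hz₀p : -(z₀ ^ 2 + a) = (p : ℂ) ^ 2) (hz₀q : z₀ ^ 2 + a + b = (q : ℂ) ^ 2) :
    Tendsto (fun z : ℂ => z / ((-I * sqrt (-(z ^ 2 + a))) * sqrt (z ^ 2 + a + b)))
      (𝓝 z₀) (𝓝 (I * z₀ / (p * q))) := by
  have hp' : sqrt (-(z₀ ^ 2 + a)) = p := by rw [hz₀p, sqrt_sq (by simpa using hp)]
  have hq' : sqrt (z₀ ^ 2 + a + b) = q := by rw [hz₀q, sqrt_sq (by simpa using hq)]
  have hpq : (p : ℂ) * q ≠ 0 := by simp [hp.ne', hq.ne']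
  have hden : (-I * sqrt (-(z₀ ^ 2 + a))) * sqrt (z₀ ^ 2 + a + b) ≠ 0 := by
    rw [hp', hq', mul_assoc]
    exact mul_ne_zero (by simp) hpq
  have hsqrt_p : ContinuousAt (fun z : ℂ => sqrt (-(z ^ 2 + a))) z₀ :=
    (continuousAt_sqrt (by simp [hz₀p, ← ofReal_pow, sq_nonneg])).comp
      (f := fun z : ℂ => -(z ^ 2 + a)) (by fun_prop)
  have hsqrt_q : ContinuousAt (fun z : ℂ => sqrt (z ^ 2 + a + b)) z₀ :=
    (continuousAt_sqrt (by simp [hz₀q, ← ofReal_pow, sq_nonneg])).comp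
      (f := fun z : ℂ => z ^ 2 + a + b) (by fun_prop)
  have hval : z₀ / ((-I * sqrt (-(z₀ ^ 2 + a))) * sqrt (z₀ ^ 2 + a + b)) = I * z₀ / (p * q) := by
    rw [div_eq_div_iff hden hpq, hp', hq']
    linear_combination z₀ * p * q * I_sq
  exact hval ▸ (continuousAt_id.div ((continuousAt_const.mul hsqrt_p).mul hsqrt_q) hden).tendsto

theorem tendsto_integral_div_sq_add {a ωa s c ω : ℝ} (hωa : 0 < ωa) (hs : 0 < s) (hc : 0 < c)
    (hsc : s ^ 2 + c ^ 2 = 1) (hω : 0 < ω) (hω2 : ω ^ 2 = a + ωa ^ 2 * s ^ 2) :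
    Tendsto (fun ε : ℝ => ∫ ℓ in (-(1/2) : ℝ)..(1/2), ((ε : ℂ) - I * ω) /
        (((ε : ℂ) - I * ω) ^ 2 + ((a + ωa ^ 2 * Real.sin (π * ℓ) ^ 2 : ℝ) : ℂ)))
      (𝓝[>] 0) (𝓝 ((ω / (ωa ^ 2 * s * c) : ℝ) : ℂ)) := by
  have hω2' : (ω : ℂ) ^ 2 = a + ωa ^ 2 * s ^ 2 := by exact_mod_cast hω2
  have hsc' : (s : ℂ) ^ 2 + (c : ℂ) ^ 2 = 1 := by exact_mod_cast hsc
  have hlim := tendsto_div_neg_I_mul_sqrt_mul_sqrt (z₀ := -(I * ω)) (a := a) (b := ωa ^ 2)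
    (mul_pos hωa hs) (mul_pos hωa hc)
    (by rw [ofReal_mul]; linear_combination -(ω : ℂ) ^ 2 * I_sq + hω2')
    (by rw [ofReal_mul, ofReal_pow]; linear_combination (ω : ℂ) ^ 2 * I_sq - hω2' - ωa ^ 2 * hsc')
  have hz : Tendsto (fun ε : ℝ => (ε : ℂ) - I * ω) (𝓝[>] 0) (𝓝 (-(I * ω))) := by
    simpa using ((by fun_prop : Continuous fun ε : ℝ => (ε : ℂ) - I * ω).tendsto 0).mono_left
      nhdsWithin_le_nhds
  have hval : I * -(I * ω) / (((ωa * s : ℝ) : ℂ) * ((ωa * c : ℝ) : ℂ))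
      = ((ω / (ωa ^ 2 * s * c) : ℝ) : ℂ) := by
    rw [mul_neg, ← mul_assoc, I_mul_I, neg_one_mul, neg_neg]
    push_cast
    ring
  refine hval ▸ (hlim.comp hz).congr' (eventually_nhdsWithin_of_forall fun ε (hε : 0 < ε) =>
    (integral_div_sq_add_eq ?_).symm)
  simp [sq]
  nlinarith

theorem stmt12_general (γ ω₀ ωa : ℝ) (hγ : 0 < γ) (hωa : 0 < ωa) (k : ℝ)
    (hk : k ∈ Set.Ioo (0:ℝ) (1/2)) :
    Filter.Tendsto
      (fun ε : ℝ => (1 + (γ : ℂ) * ∫ ℓ in (-(1/2):ℝ)..(1/2),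
        ((ε : ℂ) - Complex.I * (Real.sqrt (ω₀ ^ 2 / 2 + ωa ^ 2 * Real.sin (Real.pi * k) ^ 2) : ℂ)) /
          (((ε : ℂ) - Complex.I * (Real.sqrt (ω₀ ^ 2 / 2 + ωa ^ 2 * Real.sin (Real.pi * k) ^ 2) : ℂ)) ^ 2
            + ((ω₀ ^ 2 / 2 + ωa ^ 2 * Real.sin (Real.pi * ℓ) ^ 2 : ℝ) : ℂ)))⁻¹)
      (nhdsWithin 0 (Set.Ioi 0))
      (nhds ((ωa ^ 2 * Real.sin (2 * Real.pi * k)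
        / (ωa ^ 2 * Real.sin (2 * Real.pi * k)
            + 2 * γ * Real.sqrt (ω₀ ^ 2 / 2 + ωa ^ 2 * Real.sin (Real.pi * k) ^ 2)) : ℝ) : ℂ)) := by
  obtain ⟨hk0, hk1⟩ := hk
  have hs : 0 < Real.sin (π * k) :=
    Real.sin_pos_of_pos_of_lt_pi (by positivity) (by nlinarith [Real.pi_pos])
  have hc : 0 < Real.cos (π * k) :=
    Real.cos_pos_of_mem_Ioo ⟨by nlinarith [Real.pi_pos], by nlinarith [Real.pi_pos]⟩
  set ω := Real.sqrt (ω₀ ^ 2 / 2 + ωa ^ 2 * Real.sin (π * k) ^ 2)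
  have hω : 0 < ω := Real.sqrt_pos.mpr (by positivity)
  have hJ := tendsto_integral_div_sq_add hωa hs hc (Real.sin_sq_add_cos_sq _) hω
    (Real.sq_sqrt (by positivity))
  have hν : 1 + (γ : ℂ) * ((ω / (ωa ^ 2 * Real.sin (π * k) * Real.cos (π * k)) : ℝ) : ℂ) ≠ 0 := by
    norm_cast
    positivity
  convert (tendsto_const_nhds.add (tendsto_const_nhds.mul hJ)).inv₀ hν using 2
  norm_cast
  rw [mul_assoc, Real.sin_two_mul]
  field_simp

/-- For the nearest-neighbor chain with coupling `γ > 0`, the scattering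
coefficient `ν(k) = lim_{ε→0+} (1 + γ J̃(ε - i ω_k))⁻¹` exists and equals
`ω_a² sin(2πk)/(ω_a² sin(2πk) + 2γ √(ω₀²/2 + ω_a² sin²(πk)))`. -/
theorem stmt12 (γ ω₀ ωa : ℝ) (hγ : 0 < γ) (hω₀ : 0 ≤ ω₀) (hωa : 0 < ωa) (k : ℝ)
    (hk : k ∈ Set.Ioo (0:ℝ) (1/2)) :
    Filter.Tendsto
      (fun ε : ℝ => (1 + (γ : ℂ) * ∫ ℓ in (-(1/2):ℝ)..(1/2),
        ((ε : ℂ) - Complex.I * (Real.sqrt (ω₀ ^ 2 / 2 + ωa ^ 2 * Real.sin (Real.pi * k) ^ 2) : ℂ)) /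
          (((ε : ℂ) - Complex.I * (Real.sqrt (ω₀ ^ 2 / 2 + ωa ^ 2 * Real.sin (Real.pi * k) ^ 2) : ℂ)) ^ 2
            + ((ω₀ ^ 2 / 2 + ωa ^ 2 * Real.sin (Real.pi * ℓ) ^ 2 : ℝ) : ℂ)))⁻¹)
      (nhdsWithin 0 (Set.Ioi 0))
      (nhds ((ωa ^ 2 * Real.sin (2 * Real.pi * k)
        / (ωa ^ 2 * Real.sin (2 * Real.pi * k)
            + 2 * γ * Real.sqrt (ω₀ ^ 2 / 2 + ωa ^ 2 * Real.sin (Real.pi * k) ^ 2)) : ℝ) : ℂ)) :=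
  stmt12_general γ ω₀ ωa hγ hωa k hk
end
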